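/- The arithmetic function g defined by g(n) = (-1)^n Σ_{d | n} (-1)^d d³ for positive integers n is multiplicative; that is, g(1) = 1 and g(mn) = g(m) g(n) whenever m and n are coprime positive integers. -/

import Mathlib

/-!
Writing `s n = -(-1)^n` (so `s n = 1` for odd `n` and `s n = -1` for even `n`), the two signs
combine as `(-1)^n (-1)^d = s n * s d`, hence `g = s · ((s · id³) ∗ ζ)` with `·` the pointwise and
`∗` the Dirichlet product. The sign `s` is multiplicative because a product of coprime numbers is
even exactly when one factor is, and multiplicativity is preserved by both products.
-/

/-- `g n = (-1)^n * ∑_{d ∣ n} (-1)^d d³`, summed over the positive divisors of `n`. -/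
def g (n : ℕ) : ℤ := (-1) ^ n * ∑ d ∈ n.divisors, (-1) ^ d * (d : ℤ) ^ 3

open scoped ArithmeticFunction.zeta

theorem Nat.Coprime.neg_one_pow_mul {m n : ℕ} (h : m.Coprime n) :
    (-1 : ℤ) ^ (m * n) = -(-1) ^ (m + n) := by
  rcases Nat.even_or_odd m with hm | hm <;> rcases Nat.even_or_odd n with hn | hn
  · exact absurd h (Nat.not_coprime_of_dvd_of_dvd one_lt_two hm.two_dvd hn.two_dvd)
  all_goals simp [pow_add, pow_mul, hm.neg_one_pow, hn.neg_one_pow]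

namespace ArithmeticFunction

def oddEvenSign : ArithmeticFunction ℤ :=
  ⟨fun n => if n = 0 then 0 else -(-1) ^ n, rfl⟩

theorem oddEvenSign_apply {n : ℕ} (hn : n ≠ 0) : oddEvenSign n = -(-1) ^ n := if_neg hn

theorem isMultiplicative_oddEvenSign : IsMultiplicative oddEvenSign := by
  refine IsMultiplicative.iff_ne_zero.mpr ⟨by simp [oddEvenSign_apply], fun hm hn h => ?_⟩
  rw [oddEvenSign_apply (mul_ne_zero hm hn), oddEvenSign_apply hm, oddEvenSign_apply hn,
    h.neg_one_pow_mul, pow_add]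
  ring

def signedSigmaThree : ArithmeticFunction ℤ :=
  oddEvenSign.pmul (oddEvenSign.pmul (pow 3 : ArithmeticFunction ℤ) * ζ)

theorem isMultiplicative_signedSigmaThree : IsMultiplicative signedSigmaThree :=
  isMultiplicative_oddEvenSign.pmul
    ((isMultiplicative_oddEvenSign.pmul isMultiplicative_pow.natCast).mul
      isMultiplicative_zeta.natCast)

end ArithmeticFunction

open ArithmeticFunction

theorem g_eq_signedSigmaThree : g = ⇑signedSigmaThree := by
  funext n
  rcases eq_or_ne n 0 with rfl | hn
  · simp [g]
  rw [g, signedSigmaThree, pmul_apply, coe_mul_zeta_apply, oddEvenSign_apply hn, Finset.mul_sum,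
    Finset.mul_sum]
  refine Finset.sum_congr rfl fun d hd => ?_
  simp [oddEvenSign_apply (Nat.ne_of_gt (Nat.pos_of_mem_divisors hd)), pow_apply]

/-- The arithmetic function `g` is multiplicative. -/
theorem g_multiplicative :
    g 1 = 1 ∧
      ∀ m n : ℕ, 0 < m → 0 < n → Nat.Coprime m n → g (m * n) = g m * g n := by
  rw [g_eq_signedSigmaThree]
  exact ⟨isMultiplicative_signedSigmaThree.map_one,
    fun m n _ _ => isMultiplicative_signedSigmaThree.map_mul_of_coprime⟩
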